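/- arXiv:math/0512451 — 6 statements merged into one kernel-verified Lean document; each statement's English description precedes it below -/
import Mathlib

section
/- Let Γ = (Ω_k) be a countable family of countable sets with Ω := ⋃_k Ω_k. Assume Ω coincides with the union of m of the sets Ω_k ∈ Γ. If the number of sets in Γ satisfies #Γ > m·κ(Ω), then S(Γ) = ∅. -/
open Filter

namespace Birkhoff

variable {Ω ι : Type*}

/-- Adjacency in the associated graph `G`: two distinct vertices are adjacent
iff they lie in a common set `Ω_k`. -/
def Adj (Γ : ι → Set Ω) (g g' : Ω) : Prop :=
  g ≠ g' ∧ ∃ k, g ∈ Γ k ∧ g' ∈ Γ k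

/-- `Γ(g)`, the set of indices `k` with `g ∈ Ω_k`. -/
def idx (Γ : ι → Set Ω) (g : Ω) : Set ι :=
  {k | g ∈ Γ k}

/-- Condition (a): every point lies in only finitely many of the sets. -/
def CondA (Γ : ι → Set Ω) : Prop :=
  ∀ g : Ω, (idx Γ g).Finite

/-- Condition (1.2): `Ω_k \ Ω_j ≠ ∅` for all `j ≠ k`. -/
def Cond12 (Γ : ι → Set Ω) : Prop :=
  ∀ j k : ι, j ≠ k → (Γ k \ Γ j).Nonempty

/-- The set `S(Γ)` of nonnegative functions whose sum over each `Ω_k` is `1`. -/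
def SGamma (Γ : ι → Set Ω) : Set (Ω → ℝ) :=
  {w | (∀ g : Ω, 0 ≤ w g) ∧ ∀ k : ι, HasSum (fun g : Γ k => w g) 1}

/-- The set `S⁰(Γ)` of nonnegative functions whose sum over each `Ω_k` is `≤ 1`. -/
def S0Gamma (Γ : ι → Set Ω) : Set (Ω → ℝ) :=
  {w | (∀ g : Ω, 0 ≤ w g) ∧ ∀ k : ι, ∃ s : ℝ, s ≤ 1 ∧ HasSum (fun g : Γ k => w g) s}

/-- The set `P(Γ)` of `{0,1}`-valued functions in `S(Γ)`. -/
def PGamma (Γ : ι → Set Ω) : Set (Ω → ℝ) :=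
  {w | w ∈ SGamma Γ ∧ ∀ g : Ω, w g = 0 ∨ w g = 1}

/-- The set `P⁰(Γ)` of `{0,1}`-valued functions whose sum over each `Ω_k` is `≤ 1`. -/
def P0Gamma (Γ : ι → Set Ω) : Set (Ω → ℝ) :=
  {w | (∀ g : Ω, w g = 0 ∨ w g = 1) ∧
    ∀ k : ι, ∃ s : ℝ, s ≤ 1 ∧ HasSum (fun g : Γ k => w g) s}

/-- Condition (w): `W` is solid. -/
def CondW (W : Set (Ω → ℝ)) : Prop :=
  ∀ w ∈ W, ∀ w' : Ω → ℝ, (∀ g : Ω, |w' g| ≤ |w g|) → w' ∈ W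

/-- The list of edges of a path, as unordered pairs. -/
def edgeList (l : List Ω) : List (Sym2 Ω) :=
  (l.zip l.tail).map fun p => s(p.1, p.2)

/-- A path in the associated graph: nonempty list of vertices, consecutive
vertices adjacent, and all edges distinct. -/
def IsPathList (Γ : ι → Set Ω) (l : List Ω) : Prop :=
  l ≠ [] ∧ l.Chain' (Adj Γ) ∧ (edgeList l).Nodup

/-- Each vertex of `l` is adjacent to at most two other vertices of `l`. -/
def SimpleOn (Γ : ι → Set Ω) (l : List Ω) : Prop :=
  ∀ g ∈ l, ({g' : Ω | g' ∈ l ∧ Adj Γ g g'}).ncard ≤ 2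

/-- No set `Ω_k` contains more than two vertices of `l`. -/
def PrimitiveOn (Γ : ι → Set Ω) (l : List Ω) : Prop :=
  ∀ k : ι, ({g : Ω | g ∈ l ∧ g ∈ Γ k}).ncard ≤ 2

def IsSimplePath (Γ : ι → Set Ω) (l : List Ω) : Prop :=
  IsPathList Γ l ∧ SimpleOn Γ l

def IsPrimitivePath (Γ : ι → Set Ω) (l : List Ω) : Prop :=
  IsSimplePath Γ l ∧ PrimitiveOn Γ l

/-- A (simple) cycle `(g₁, …, g_m, g₁)`, encoded as the list of its `m + 1`
consecutive vertices (first vertex repeated at the end). -/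
def IsCycle (Γ : ι → Set Ω) (l : List Ω) : Prop :=
  IsPathList Γ l ∧ l.head? = l.getLast? ∧ 2 ≤ l.length ∧ l.dropLast.Nodup

def IsSimpleCycle (Γ : ι → Set Ω) (l : List Ω) : Prop :=
  IsCycle Γ l ∧ SimpleOn Γ l

def IsPrimitiveCycle (Γ : ι → Set Ω) (l : List Ω) : Prop :=
  IsSimpleCycle Γ l ∧ PrimitiveOn Γ l

/-- The cycle `(g₁, …, g_m, g₁)`, a list with `m + 1` entries, is odd iff `m` is odd. -/
def OddCycleList (l : List Ω) : Prop :=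
  Odd (l.length - 1)

/-- `g'` can be reached from `g` by a path all of whose vertices lie in `A`. -/
def ReachIn (Γ : ι → Set Ω) (A : Set Ω) (g g' : Ω) : Prop :=
  ∃ l : List Ω, l.Chain' (Adj Γ) ∧ (∀ x ∈ l, x ∈ A) ∧
    l.head? = some g ∧ l.getLast? = some g'

/-- The connected component of `g` in the subgraph of `G` induced on `A`. -/
def component (Γ : ι → Set Ω) (A : Set Ω) (g : Ω) : Set Ω :=
  {g' | ReachIn Γ A g g'}

/-- The subgraph induced on `A` is connected. -/
def ConnectedOn (Γ : ι → Set Ω) (A : Set Ω) : Prop :=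
  ∀ g ∈ A, ∀ g' ∈ A, ReachIn Γ A g g'

/-- `G_n := ⋃_{k ≤ n} Ω_k`. -/
def Gn (Γ : ℕ → Set Ω) (n : ℕ) : Set Ω :=
  ⋃ k ∈ {k : ℕ | k ≤ n}, Γ k

/-- The space `W'` of functions pairing summably with every element of `W`. -/
def Wdual (W : Set (Ω → ℝ)) : Set (Ω → ℝ) :=
  {w' | ∀ w ∈ W, Summable fun g : Ω => |w g * w' g|}

/-- `S_n⁰(Γ, W)`: (extensions by zero of) nonnegative functions on `G_n` whose
sums over `Ω_k`, `k ≤ n`, equal `1`, whose sums over `Ω_k ∩ G_n`, `k > n`, are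
`≤ 1`, and which belong to `W`. -/
def Sn0 (Γ : ℕ → Set Ω) (W : Set (Ω → ℝ)) (n : ℕ) : Set (Ω → ℝ) :=
  {w | (∀ g : Ω, 0 ≤ w g) ∧ (∀ g ∉ Gn Γ n, w g = 0) ∧
    (∀ k ≤ n, HasSum (fun g : Γ k => w g) 1) ∧
    (∀ k > n, ∃ s : ℝ, s ≤ 1 ∧ HasSum (fun g : Γ k => w g) s) ∧ w ∈ W}


/-- Lemma 1.3: if `Ω` is the union of `m` of the sets `Ω_k` and
`#Γ > m·κ(Ω)`, then `S(Γ) = ∅`. -/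
theorem stmt0 {Ω ι : Type*} [Countable Ω] [Countable ι] (Γ : ι → Set Ω)
    (hcover : ⋃ k : ι, Γ k = Set.univ)
    (m : ℕ) (K : Finset ι) (hm : K.card = m)
    (hK : ⋃ k ∈ K, Γ k = Set.univ)
    (hcard : (m : ℕ∞) * (⨆ g : Ω, (idx Γ g).encard) < (Set.univ : Set ι).encard) :
    SGamma Γ = ∅ := by
  classical
  rw [Set.eq_empty_iff_forall_notMem]
  rintro w ⟨h0, h1⟩
  have hsum_k : ∀ k, HasSum ((Γ k).indicator w) 1 := fun k =>
    hasSum_subtype_iff_indicator.mp (h1 k)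
  rcases Nat.eq_zero_or_pos m with hm0 | hmpos
  · -- m = 0 : Ω is empty, but ι is nonempty
    subst hm0
    rw [Finset.card_eq_zero] at hm
    subst hm
    simp only [Finset.notMem_empty, Set.iUnion_of_empty, Set.iUnion_empty] at hK
    have hΩ : IsEmpty Ω := by
      constructor; intro g
      have : g ∈ (Set.univ : Set Ω) := trivial
      rw [← hK] at this; exact this
    have hι : Nonempty ι := by
      rw [Nat.cast_zero, zero_mul] at hcard
      rcases Set.encard_pos.mp hcard with ⟨k, -⟩
      exact ⟨k⟩
    obtain ⟨k⟩ := hι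
    have : IsEmpty (Γ k : Set Ω).Elem := ⟨fun x => hΩ.elim x.1⟩
    have h2 := (h1 k).unique hasSum_empty
    norm_num at h2
  · -- m ≥ 1
    set C := ⨆ g : Ω, (idx Γ g).encard with hC
    have hCtop : C ≠ ⊤ := by
      intro h
      rw [h, ENat.mul_top (by exact_mod_cast hmpos.ne')] at hcard
      exact (not_top_lt hcard)
    obtain ⟨n, hn⟩ := WithTop.ne_top_iff_exists.mp hCtop
    have hidx : ∀ g : Ω, (idx Γ g).encard ≤ n := fun g => by
      exact le_of_le_of_eq (le_iSup (fun g : Ω => (idx Γ g).encard) g) hn.symm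
    have hidxfin : ∀ g : Ω, (idx Γ g).Finite := fun g =>
      (Set.encard_le_coe_iff.mp (hidx g)).1
    have hidxcard : ∀ g : Ω, (idx Γ g).ncard ≤ n := fun g => by
      obtain ⟨-, n₀, he, hle⟩ := Set.encard_le_coe_iff.mp (hidx g)
      have : (idx Γ g).ncard = n₀ := by rw [Set.ncard_def, he]; rfl
      omega
    -- get a finset F of ι with card m*n+1
    have hle : ((m * n : ℕ) : ℕ∞) + 1 ≤ (Set.univ : Set ι).encard := by
      apply Order.add_one_le_of_lt
      rw [← hn] at hcard
      exact_mod_cast hcard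
    obtain ⟨t, -, ht⟩ := Set.exists_subset_encard_eq hle
    have htfin : t.Finite := Set.finite_of_encard_eq_coe (by exact_mod_cast ht)
    have htcard : htfin.toFinset.card = m * n + 1 := by
      have h2 : t.encard = ((m * n + 1 : ℕ) : ℕ∞) := by rw [ht]; push_cast; ring
      have h3 : t.ncard = m * n + 1 := by rw [Set.ncard_def, h2, ENat.toNat_coe]
      rw [← Set.ncard_eq_toFinset_card t htfin]; exact h3
    set F := htfin.toFinset with hF
    -- summability of w
    have hptK : ∀ g : Ω, w g ≤ ∑ k ∈ K, (Γ k).indicator w g := by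
      intro g
      have : g ∈ ⋃ k ∈ K, Γ k := by rw [hK]; trivial
      obtain ⟨k, hkK, hgk⟩ := Set.mem_iUnion₂.mp this
      calc w g = (Γ k).indicator w g := (Set.indicator_of_mem hgk w).symm
        _ ≤ ∑ k ∈ K, (Γ k).indicator w g :=
          Finset.single_le_sum (fun j _ => Set.indicator_nonneg (fun g _ => h0 g) g) hkK
    have hsummand : ∀ (S : Finset ι), Summable (fun g => ∑ k ∈ S, (Γ k).indicator w g) := by
      intro S
      exact summable_sum (fun k _ => (hsum_k k).summable)
    have hw_sum : Summable w :=
      Summable.of_nonneg_of_le h0 hptK (hsummand K)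
    have htsumK : ∑' g, ∑ k ∈ K, (Γ k).indicator w g = (m : ℝ) := by
      rw [Summable.tsum_finsetSum (fun k _ => (hsum_k k).summable)]
      simp only [fun k => (hsum_k k).tsum_eq]
      rw [Finset.sum_const, hm, nsmul_eq_mul, mul_one]
    have hwm : ∑' g, w g ≤ (m : ℝ) := by
      rw [← htsumK]
      exact Summable.tsum_le_tsum hptK hw_sum (hsummand K)
    -- pointwise bound for F
    have hptF : ∀ g : Ω, ∑ k ∈ F, (Γ k).indicator w g ≤ (n : ℝ) * w g := by
      intro g
      have heq : ∑ k ∈ F, (Γ k).indicator w g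
          = ((F.filter (fun k => g ∈ Γ k)).card : ℝ) * w g := by
        simp only [Set.indicator_apply]
        rw [Finset.sum_ite, Finset.sum_const_zero, add_zero, Finset.sum_const,
          nsmul_eq_mul]
      rw [heq]
      have hsub : ((F.filter (fun k => g ∈ Γ k)) : Set ι) ⊆ idx Γ g := by
        intro k hk
        simp only [Finset.coe_filter, Set.mem_setOf_eq] at hk
        exact hk.2
      have hcardle : (F.filter (fun k => g ∈ Γ k)).card ≤ n := by
        rw [← Set.ncard_coe_finset]
        exact le_trans (Set.ncard_le_ncard hsub (hidxfin g)) (hidxcard g)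
      exact mul_le_mul_of_nonneg_right (by exact_mod_cast hcardle) (h0 g)
    -- main inequality
    have hmain : ((m * n + 1 : ℕ) : ℝ) ≤ (n : ℝ) * (m : ℝ) := by
      calc ((m * n + 1 : ℕ) : ℝ) = (F.card : ℝ) := by rw [htcard]
        _ = ∑ k ∈ F, (1 : ℝ) := by rw [Finset.sum_const, nsmul_eq_mul, mul_one]
        _ = ∑ k ∈ F, ∑' g, (Γ k).indicator w g := by
            refine Finset.sum_congr rfl fun k _ => ?_
            rw [(hsum_k k).tsum_eq]
        _ = ∑' g, ∑ k ∈ F, (Γ k).indicator w g :=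
            (Summable.tsum_finsetSum (fun k _ => (hsum_k k).summable)).symm
        _ ≤ ∑' g, (n : ℝ) * w g :=
            Summable.tsum_le_tsum hptF (hsummand F) (hw_sum.mul_left _)
        _ = (n : ℝ) * ∑' g, w g := tsum_mul_left
        _ ≤ (n : ℝ) * (m : ℝ) := by
            exact mul_le_mul_of_nonneg_left hwm (by positivity)
    push_cast at hmain
    nlinarith [hmain]


end Birkhoff
end

section
/- Let n ∈ ℕ and let w be a nonnegative function on G_n := ⋃_{k≤n} Ω_k such that Σ_{g∈Ω_k} w(g) = 1 for all k ≤ n and Σ_{g∈Ω_k∩G_n} w(g) ≤ 1 for all k > n. If Γ contains infinitely many distinct sets and condition (a) holds, then Σ_{g∈Ω_j∩G_n} w(g) → 0 as j → ∞. -/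
open Filter

namespace Birkhoff

variable {Ω ι : Type*}

/-- Lemma 1.4. -/
theorem stmt1 {Ω : Type*} [Countable Ω] (Γ : ℕ → Set Ω)
    (hinf : {S : Set Ω | ∃ k, Γ k = S}.Infinite) (ha : CondA Γ)
    (n : ℕ) (w : Ω → ℝ) (hpos : ∀ g ∈ Gn Γ n, 0 ≤ w g)
    (h1 : ∀ k ≤ n, HasSum (fun g : Γ k => w g) 1)
    (h2 : ∀ k > n, ∃ s : ℝ, s ≤ 1 ∧ HasSum (fun g : (Γ k ∩ Gn Γ n : Set Ω) => w g) s) :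
    Filter.Tendsto (fun j : ℕ => ∑' g : (Γ j ∩ Gn Γ n : Set Ω), w g)
      Filter.atTop (nhds 0) := by
  classical
  set F : ℕ → Ω → ℝ := fun j => (Γ j ∩ Gn Γ n).indicator w with hF
  set B : Ω → ℝ := fun g => ∑ k ∈ Finset.range (n + 1), (Γ k).indicator w g with hB
  have hmem : ∀ k ≤ n, ∀ g ∈ Γ k, g ∈ Gn Γ n := by
    intro k hk g hg
    exact Set.mem_biUnion hk hg
  have hind_nonneg : ∀ k ≤ n, ∀ g, 0 ≤ (Γ k).indicator w g := by
    intro k hk g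
    by_cases hg : g ∈ Γ k
    · rw [Set.indicator_of_mem hg]; exact hpos g (hmem k hk g hg)
    · rw [Set.indicator_of_notMem hg]
  have hsumB : Summable B := by
    apply summable_sum
    intro k hk
    have := (h1 k (Nat.lt_succ_iff.mp (Finset.mem_range.mp hk))).summable
    exact summable_subtype_iff_indicator.mp this
  have hbound : ∀ j, ∀ g, ‖F j g‖ ≤ B g := by
    intro j g
    by_cases hg : g ∈ Γ j ∩ Gn Γ n
    · rw [hF]
      simp only [Set.indicator_of_mem hg]
      rw [Real.norm_of_nonneg (hpos g hg.2)]
      obtain ⟨s, hs, hgs⟩ := Set.mem_iUnion₂.mp hg.2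
      calc w g = (Γ s).indicator w g := by rw [Set.indicator_of_mem hgs]
        _ ≤ B g := Finset.single_le_sum
            (fun k hk => hind_nonneg k (Nat.lt_succ_iff.mp (Finset.mem_range.mp hk)) g)
            (Finset.mem_range.mpr (Nat.lt_succ_of_le hs))
    · rw [hF]
      simp only [Set.indicator_of_notMem hg, norm_zero]
      exact Finset.sum_nonneg fun k hk =>
        hind_nonneg k (Nat.lt_succ_iff.mp (Finset.mem_range.mp hk)) g
  have hlim : ∀ g, Tendsto (fun j => F j g) atTop (nhds (0 : ℝ)) := by
    intro g
    by_cases hg : g ∈ Gn Γ n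
    · obtain ⟨N, hN⟩ := (ha g).bddAbove
      apply tendsto_const_nhds.congr' (Filter.eventually_atTop.mpr ⟨N + 1, ?_⟩)
      intro j hj
      have hgj : g ∉ Γ j := fun h => by
        have := hN (show j ∈ idx Γ g from h)
        omega
      exact (Set.indicator_of_notMem (fun h => hgj h.1) w).symm
    · apply tendsto_const_nhds.congr fun j => ?_
      exact (Set.indicator_of_notMem (fun h => hg h.2) w).symm
  have key := tendsto_tsum_of_dominated_convergence hsumB hlim
    (Filter.Eventually.of_forall hbound)
  rw [tsum_zero] at key
  refine key.congr fun j => ?_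
  exact (tsum_subtype (Γ j ∩ Gn Γ n) w).symm

end Birkhoff
end

section
/- Suppose Γ contains infinitely many distinct sets and condition (a) holds. If Ω coincides with the union of a finite collection of the sets Ω_k ∈ Γ, then S(Γ) = ∅. -/
open Filter

namespace Birkhoff

variable {Ω ι : Type*}

/-- Corollary 1.5. -/
theorem stmt2 {Ω : Type*} [Countable Ω] (Γ : ℕ → Set Ω)
    (hinf : {S : Set Ω | ∃ k, Γ k = S}.Infinite) (ha : CondA Γ)
    (K : Finset ℕ) (hK : ⋃ k ∈ K, Γ k = Set.univ) :
    SGamma Γ = ∅ := by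
  rw [Set.eq_empty_iff_forall_notMem]
  intro w hw
  obtain ⟨hpos, hsum⟩ := hw
  have hind : ∀ k, HasSum ((Γ k).indicator w) 1 := fun k =>
    (hasSum_subtype_iff_indicator).mp (hsum k)
  have hsummable : Summable w := by
    have hS : Summable (fun g : Ω => ∑ k ∈ K, (Γ k).indicator w g) :=
      summable_sum fun k _ => (hind k).summable
    refine Summable.of_nonneg_of_le hpos ?_ hS
    intro g
    have hg : g ∈ ⋃ k ∈ K, Γ k := by rw [hK]; trivial
    obtain ⟨k, hkK, hgk⟩ := Set.mem_iUnion₂.mp hg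
    calc w g = (Γ k).indicator w g := by rw [Set.indicator_of_mem hgk]
      _ ≤ ∑ j ∈ K, (Γ j).indicator w g := by
          apply Finset.single_le_sum (fun j _ => Set.indicator_nonneg (fun x _ => hpos x) g) hkK
  have htend := tendsto_tsum_compl_atTop_zero w
  have hev : ∀ᶠ F : Finset Ω in atTop, (∑' x : {x : Ω // x ∉ F}, w x) < 1 :=
    htend.eventually (gt_mem_nhds one_pos)
  obtain ⟨F, hF⟩ := hev.exists
  have hmeet : ∀ k : ℕ, ∃ g ∈ F, g ∈ Γ k := by
    intro k
    by_contra hcon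
    push_neg at hcon
    have hle : (1:ℝ) ≤ ∑' x : {x : Ω // x ∉ F}, w x := by
      rw [← (hsum k).tsum_eq]
      refine Summable.tsum_le_tsum_of_inj (fun g : Γ k => (⟨g.1, fun hg => hcon g.1 hg g.2⟩ : {x : Ω // x ∉ F})) ?_ (fun c _ => hpos c.1) (fun b => le_refl _) (hsum k).summable (hsummable.subtype _)
      intro a b hab
      exact Subtype.ext (congrArg Subtype.val hab :)
    exact absurd hF (not_lt.mpr hle)
  have hsub : (Set.univ : Set ℕ) ⊆ ⋃ g ∈ (F : Set Ω), idx Γ g := by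
    intro k _
    obtain ⟨g, hgF, hgk⟩ := hmeet k
    exact Set.mem_biUnion hgF hgk
  have hfin : (⋃ g ∈ (F : Set Ω), idx Γ g).Finite :=
    F.finite_toSet.biUnion fun g _ => ha g
  exact Set.infinite_univ (hfin.subset hsub)

end Birkhoff
end

section
/- Any two vertices lying in a connected subgraph G' of the associated graph G can be joined by a primitive path contained in G'; in particular, any path joining two given vertices of G' with the minimal possible number of vertices is primitive. -/
open Filter

namespace Birkhoff

variable {Ω ι : Type*}

section aux

variable {α : Type*} {R : α → α → Prop}

private lemma chain'_getElem {l : List α} (h : l.Chain' R) {i : ℕ} (hi : i + 1 < l.length) :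
    R l[i] l[i + 1] := List.isChain_iff_getElem.1 h i (by omega)

private lemma nodup_getElem_inj {l : List α} (h : l.Nodup) {i j : ℕ}
    (hi : i < l.length) (hj : j < l.length) (he : l[i] = l[j]) : i = j := by
  have := List.nodup_iff_injective_get.1 h (a₁ := ⟨i, hi⟩) (a₂ := ⟨j, hj⟩) (by simpa using he)
  simpa using congrArg Fin.val this

private lemma getLast?_drop_eq {l : List α} {j : ℕ} (hj : j < l.length) :
    (l.drop j).getLast? = l.getLast? := by
  rw [List.getLast?_eq_getElem?, List.getLast?_eq_getElem?, List.length_drop,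
    List.getElem?_drop]
  congr 1
  omega

private lemma shortcut {l : List α} (hchain : l.Chain' R) {t j : ℕ}
    (htj : t ≤ j) (hj : j < l.length)
    (hjunction : ∀ x, t = x + 1 → ∀ (_ : x < l.length), R l[x] l[j])
    (hhead : t = 0 → l[j]? = l[0]?) :
    ∃ l' : List α, l'.Chain' R ∧ (∀ x ∈ l', x ∈ l) ∧ l'.head? = l.head? ∧
      l'.getLast? = l.getLast? ∧ l'.length + j = l.length + t := by
  have ht : t ≤ l.length := le_of_lt (lt_of_le_of_lt htj hj)
  have hdropne : l.drop j ≠ [] := by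
    intro h; have := congrArg List.length h; simp [List.length_drop] at this; omega
  refine ⟨l.take t ++ l.drop j, ?_, ?_, ?_, ?_, ?_⟩
  · rw [List.Chain', List.isChain_append]
    refine ⟨hchain.take t, hchain.drop j, ?_⟩
    intro x hx y hy
    rw [List.head?_drop, List.getElem?_eq_getElem hj, Option.mem_def, Option.some_inj] at hy
    subst hy
    rw [List.getLast?_eq_getElem?] at hx
    rcases Nat.eq_zero_or_pos t with h0 | h0
    · subst h0; simp at hx
    · have hlen : (l.take t).length = t := by rw [List.length_take]; omega
      have hlt : t - 1 < (l.take t).length := by omega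
      rw [hlen, List.getElem?_eq_getElem hlt, Option.mem_def, Option.some_inj] at hx
      subst hx
      rw [List.getElem_take]
      exact hjunction (t - 1) (by omega) (by omega)
  · intro x hx
    rcases List.mem_append.1 hx with h | h
    · exact List.mem_of_mem_take h
    · exact List.mem_of_mem_drop h
  · rcases Nat.eq_zero_or_pos t with h0 | h0
    · subst h0
      simp only [List.take_zero, List.nil_append, List.head?_drop]
      rw [hhead rfl]
      cases l with
      | nil => simp at hj
      | cons a l => simp
    · have hne : l.take t ≠ [] := by
        have hlen : (l.take t).length = t := by rw [List.length_take]; omega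
        intro h; rw [h] at hlen; simp at hlen; omega
      rw [List.head?_append_of_ne_nil _ hne]
      cases l with
      | nil => simp at hj
      | cons a l =>
        cases t with
        | zero => omega
        | succ t => simp
  · rw [List.getLast?_append_of_ne_nil _ hdropne, getLast?_drop_eq hj]
  · rw [List.length_append, List.length_take, List.length_drop]
    omega


variable {Ω ι : Type*}

private lemma adj_symm {Γ : ι → Set Ω} {a b : Ω} (h : Adj Γ a b) : Adj Γ b a :=
  ⟨h.1.symm, h.2.imp fun _ hk => ⟨hk.2, hk.1⟩⟩

/-- Auxiliary: being a chain in `G'` from `g` to `g'`. -/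
private def PathProp (Γ : ι → Set Ω) (G' : Set Ω) (g g' : Ω) (l : List Ω) : Prop :=
  l.Chain' (Adj Γ) ∧ (∀ x ∈ l, x ∈ G') ∧ l.head? = some g ∧ l.getLast? = some g'

private lemma min_shortcut_false {Γ : ι → Set Ω} {G' : Set Ω} {g g' : Ω} {l : List Ω}
    (hl : PathProp Γ G' g g' l)
    (hmin : ∀ l', PathProp Γ G' g g' l' → l.length ≤ l'.length)
    {t j : ℕ} (htj : t < j) (hj : j < l.length)
    (hjunction : ∀ x, t = x + 1 → ∀ (_ : x < l.length), Adj Γ l[x] l[j])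
    (hhead : t = 0 → l[j]? = l[0]?) : False := by
  obtain ⟨l', h1, h2, h3, h4, h5⟩ := shortcut hl.1 (le_of_lt htj) hj hjunction hhead
  have hP : PathProp Γ G' g g' l' :=
    ⟨h1, fun x hx => hl.2.1 x (h2 x hx), h3.trans hl.2.2.1, h4.trans hl.2.2.2⟩
  have := hmin l' hP
  omega

private lemma min_nodup {Γ : ι → Set Ω} {G' : Set Ω} {g g' : Ω} {l : List Ω}
    (hl : PathProp Γ G' g g' l)
    (hmin : ∀ l', PathProp Γ G' g g' l' → l.length ≤ l'.length) : l.Nodup := by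
  by_contra hnd
  rw [List.nodup_iff_injective_get] at hnd
  obtain ⟨a, b, hab, hne⟩ := Function.not_injective_iff.1 hnd
  have key : ∀ (i j : ℕ) (hi : i < l.length) (hj : j < l.length),
      i < j → l[i] = l[j] → False := by
    intro i j hi hj hij heq
    refine min_shortcut_false hl hmin hij hj (fun x hx hxl => ?_) (fun h0 => ?_)
    · have hx1 : x + 1 < l.length := by omega
      have hc := chain'_getElem hl.1 hx1
      have e : l[x+1]'hx1 = l[j] := by
        have e2 : l[x+1]'hx1 = l[i]'hi := by congr 1; omega
        rw [e2, heq]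
      rwa [e] at hc
    · subst h0
      rw [List.getElem?_eq_getElem hj, List.getElem?_eq_getElem hi, ← heq]
  rcases lt_trichotomy (a : ℕ) (b : ℕ) with h | h | h
  · exact key a b a.2 b.2 h (by simpa using hab)
  · exact hne (Fin.ext h)
  · exact key b a b.2 a.2 h (by simpa using hab.symm)

private lemma min_adj_indices {Γ : ι → Set Ω} {G' : Set Ω} {g g' : Ω} {l : List Ω}
    (hl : PathProp Γ G' g g' l)
    (hmin : ∀ l', PathProp Γ G' g g' l' → l.length ≤ l'.length)
    {i j : ℕ} (hi : i < l.length) (hj : j < l.length)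
    (hadj : Adj Γ l[i] l[j]) : i = j + 1 ∨ j = i + 1 := by
  have gap : ∀ (p q : ℕ) (hp : p < l.length) (hq : q < l.length),
      p + 1 < q → Adj Γ l[p] l[q] → False := by
    intro p q hp hq hpq h
    exact min_shortcut_false hl hmin (show p + 1 < q from hpq) hq
      (fun x hx hxl => by
        have : x = p := by omega
        subst this; exact h)
      (fun h0 => by omega)
  have hne : i ≠ j := by
    intro h; subst h; exact hadj.1 rfl
  rcases lt_trichotomy i j with h | h | h
  · rcases Nat.lt_or_ge (i + 1) j with h2 | h2
    · exact absurd hadj (fun ha => gap i j hi hj h2 ha)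
    · right; omega
  · exact absurd h hne
  · rcases Nat.lt_or_ge (j + 1) i with h2 | h2
    · exact absurd (adj_symm hadj) (fun ha => gap j i hj hi h2 ha)
    · left; omega

private lemma edgeList_nodup_of_nodup {l : List Ω} (h : l.Nodup) :
    (edgeList l).Nodup := by
  have hlen : (edgeList l).length = min l.length l.tail.length := by
    simp [edgeList]
  have hb : ∀ i : ℕ, i < (edgeList l).length → i + 1 < l.length := by
    intro i hi
    rw [hlen, List.length_tail] at hi
    omega
  have hget : ∀ (i : ℕ) (hi : i < (edgeList l).length),
      (edgeList l)[i] = s(l[i]'(by have := hb i hi; omega), l[i+1]'(hb i hi)) := by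
    intro i hi
    simp only [edgeList, List.getElem_map, List.getElem_zip, List.getElem_tail]
  rw [List.nodup_iff_injective_get]
  intro a b hab
  rw [List.get_eq_getElem, List.get_eq_getElem, hget a.1 a.2, hget b.1 b.2,
    Sym2.eq_iff] at hab
  have ha1 := hb a.1 a.2
  have hb1 := hb b.1 b.2
  rcases hab with ⟨h1, h2⟩ | ⟨h1, h2⟩
  · exact Fin.ext (nodup_getElem_inj h (by omega) (by omega) h1)
  · have e1 := nodup_getElem_inj h (by omega) (by omega) h1
    have e2 := nodup_getElem_inj h (by omega) (by omega) h2
    omega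

private lemma min_primitive {Γ : ι → Set Ω} {G' : Set Ω} {g g' : Ω} {l : List Ω}
    (hl : PathProp Γ G' g g' l)
    (hmin : ∀ l', PathProp Γ G' g g' l' → l.length ≤ l'.length) :
    IsPrimitivePath Γ l := by
  have hnd : l.Nodup := min_nodup hl hmin
  have hne : l ≠ [] := by
    intro h
    have := hl.2.2.1
    rw [h] at this
    simp at this
  refine ⟨⟨⟨hne, hl.1, edgeList_nodup_of_nodup hnd⟩, ?_⟩, ?_⟩
  · intro v hv
    by_contra hcard
    push_neg at hcard
    have hfin : ({w : Ω | w ∈ l ∧ Adj Γ v w}).Finite :=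
      l.finite_toSet.subset fun x hx => hx.1
    obtain ⟨a, ha, b, hb, c, hc, hab, hac, hbc⟩ := (Set.two_lt_ncard hfin).1 hcard
    obtain ⟨p, hp, hpv⟩ := List.mem_iff_getElem.1 hv
    obtain ⟨q, hq, hqa⟩ := List.mem_iff_getElem.1 ha.1
    obtain ⟨r, hr, hrb⟩ := List.mem_iff_getElem.1 hb.1
    obtain ⟨s', hs, hsc⟩ := List.mem_iff_getElem.1 hc.1
    have h1 := min_adj_indices hl hmin hp hq (by rw [hpv, hqa]; exact ha.2)
    have h2 := min_adj_indices hl hmin hp hr (by rw [hpv, hrb]; exact hb.2)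
    have h3 := min_adj_indices hl hmin hp hs (by rw [hpv, hsc]; exact hc.2)
    have hqr : q ≠ r := by intro h; subst h; rw [hqa] at hrb; exact hab hrb
    have hqs : q ≠ s' := by intro h; subst h; rw [hqa] at hsc; exact hac hsc
    have hrs : r ≠ s' := by intro h; subst h; rw [hrb] at hsc; exact hbc hsc
    omega
  · intro k
    by_contra hcard
    push_neg at hcard
    have hfin : ({x : Ω | x ∈ l ∧ x ∈ Γ k}).Finite :=
      l.finite_toSet.subset fun x hx => hx.1
    obtain ⟨a, ha, b, hb, c, hc, hab, hac, hbc⟩ := (Set.two_lt_ncard hfin).1 hcard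
    obtain ⟨q, hq, hqa⟩ := List.mem_iff_getElem.1 ha.1
    obtain ⟨r, hr, hrb⟩ := List.mem_iff_getElem.1 hb.1
    obtain ⟨s', hs, hsc⟩ := List.mem_iff_getElem.1 hc.1
    have h1 := min_adj_indices hl hmin hq hr
      (⟨by rw [hqa, hrb]; exact hab, k, by rw [hqa]; exact ha.2, by rw [hrb]; exact hb.2⟩)
    have h2 := min_adj_indices hl hmin hq hs
      (⟨by rw [hqa, hsc]; exact hac, k, by rw [hqa]; exact ha.2, by rw [hsc]; exact hc.2⟩)
    have h3 := min_adj_indices hl hmin hr hs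
      (⟨by rw [hrb, hsc]; exact hbc, k, by rw [hrb]; exact hb.2, by rw [hsc]; exact hc.2⟩)
    omega

end aux

/-- Any two vertices of a connected subgraph `G'` are joined by a primitive path
lying in `G'`; moreover any path in `G'` joining two given vertices with the
minimal possible number of vertices is primitive. -/
theorem stmt3 {Ω ι : Type*} [Countable Ω] (Γ : ι → Set Ω)
    (G' : Set Ω) (hconn : ConnectedOn Γ G')
    (g g' : Ω) (hg : g ∈ G') (hg' : g' ∈ G') :
    (∃ l : List Ω, IsPrimitivePath Γ l ∧ (∀ x ∈ l, x ∈ G') ∧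
      l.head? = some g ∧ l.getLast? = some g') ∧
    (∀ l : List Ω, IsPathList Γ l → (∀ x ∈ l, x ∈ G') →
      l.head? = some g → l.getLast? = some g' →
      (∀ l' : List Ω, IsPathList Γ l' → (∀ x ∈ l', x ∈ G') →
        l'.head? = some g → l'.getLast? = some g' → l.length ≤ l'.length) →
      IsPrimitivePath Γ l) := by
  classical
  have hex : ∃ n : ℕ, ∃ l : List Ω, PathProp Γ G' g g' l ∧ l.length = n := by
    obtain ⟨l, h1, h2, h3, h4⟩ := hconn g hg g' hg'
    exact ⟨l.length, l, ⟨h1, h2, h3, h4⟩, rfl⟩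
  obtain ⟨l₀, hl₀, hlen₀⟩ := Nat.find_spec hex
  have hmin₀ : ∀ l', PathProp Γ G' g g' l' → l₀.length ≤ l'.length := by
    intro l' h'
    rw [hlen₀]
    exact Nat.find_le ⟨l', h', rfl⟩
  have hprim₀ := min_primitive hl₀ hmin₀
  constructor
  · exact ⟨l₀, hprim₀, hl₀.2.1, hl₀.2.2.1, hl₀.2.2.2⟩
  · intro l hpath hmem hh hlast hminpath
    have hP : PathProp Γ G' g g' l := ⟨hpath.2.1, hmem, hh, hlast⟩
    refine min_primitive hP fun l' h' => ?_
    calc l.length ≤ l₀.length :=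
          hminpath l₀ hprim₀.1.1 hl₀.2.1 hl₀.2.2.1 hl₀.2.2.2
      _ ≤ l'.length := hmin₀ l' h' 

end Birkhoff
end

section
/- Let G̃ be a subgraph of the associated graph G satisfying condition (a₁). If κ(g) ≤ 2 for all vertices g of G̃ and G̃ contains no primitive cycles, then every simple cycle of G̃ is contained in one of the subgraphs Ω_k. -/
open Filter

namespace Birkhoff

variable {Ω ι : Type*}

lemma chainAll {α : Type*} {R : α → α → Prop} {T L : Set α}
    (hcl : ∀ y ∈ T, ∀ z ∈ L, R y z → z ∈ T) :
    ∀ (x : α) (l : List α), List.Chain R x l → (∀ z ∈ l, z ∈ L) → x ∈ T →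
      ∀ z ∈ l, z ∈ T := by
  intro x l
  induction l generalizing x with
  | nil => intro _ _ _ z hz; simp at hz
  | cons a t ih =>
    intro hch hL hx z hz
    rcases List.chain_cons.1 hch with ⟨hxa, hch'⟩
    have ha : a ∈ T := hcl x hx a (hL a (by simp)) hxa
    rcases List.mem_cons.1 hz with rfl | hz
    · exact ha
    · exact ih a hch' (fun w hw => hL w (by simp [hw])) ha z hz

/-- Lemma 2.3. -/
theorem stmt5 {Ω ι : Type*} [Countable Ω] (Γ : ι → Set Ω) (Gt : Set Ω)
    (ha1 : ∀ g ∈ Gt, ∀ g' ∈ Gt, g ≠ g' → idx Γ g ≠ idx Γ g')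
    (hk : ∀ g ∈ Gt, (idx Γ g).encard ≤ 2)
    (hnoprim : ¬ ∃ l : List Ω, IsPrimitiveCycle Γ l ∧ ∀ x ∈ l, x ∈ Gt)
    (l : List Ω) (hl : IsSimpleCycle Γ l) (hlG : ∀ x ∈ l, x ∈ Gt) :
    ∃ k : ι, ∀ x ∈ l, x ∈ Γ k := by
  classical
  have hnotprim : ¬ PrimitiveOn Γ l := fun hp => hnoprim ⟨l, ⟨hl, hp⟩, hlG⟩
  rw [PrimitiveOn] at hnotprim
  push_neg at hnotprim
  obtain ⟨k, hk3⟩ := hnotprim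
  have hfin : ({g : Ω | g ∈ l ∧ g ∈ Γ k}).Finite :=
    l.finite_toSet.subset (fun x hx => hx.1)
  obtain ⟨g1, g2, g3, hg1, hg2, hg3, h12, h13, h23⟩ :=
    (Set.two_lt_ncard_iff hfin).1 hk3
  have simple : SimpleOn Γ l := hl.2
  have hchain : l.Chain' (Adj Γ) := hl.1.1.2.1
  -- neighbors of a vertex of `Γ k ∩ l` stay among the other two
  have nbr : ∀ a b c : Ω, a ∈ l → a ∈ Γ k → b ∈ l → b ∈ Γ k → c ∈ l → c ∈ Γ k →
      a ≠ b → a ≠ c → b ≠ c → ∀ z ∈ l, Adj Γ a z → z = b ∨ z = c := by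
    intro a b c hal hak hbl hbk hcl hck hab hac hbc z hzl hadj
    have hsub : ({b, c} : Set Ω) ⊆ {g' | g' ∈ l ∧ Adj Γ a g'} := by
      intro x hx
      rcases hx with rfl | rfl
      · exact ⟨hbl, hab, k, hak, hbk⟩
      · exact ⟨hcl, hac, k, hak, hck⟩
    have hfin2 : ({g' : Ω | g' ∈ l ∧ Adj Γ a g'}).Finite :=
      l.finite_toSet.subset (fun x hx => hx.1)
    have heq : ({b, c} : Set Ω) = {g' | g' ∈ l ∧ Adj Γ a g'} :=
      Set.eq_of_subset_of_ncard_le hsub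
        (le_trans (simple a hal) (le_of_eq (Set.ncard_pair hbc).symm)) hfin2
    have hz : z ∈ ({b, c} : Set Ω) := heq ▸ (⟨hzl, hadj⟩ : z ∈ {g' | g' ∈ l ∧ Adj Γ a g'})
    simpa using hz
  set T : Set Ω := {g1, g2, g3} with hT
  have key : ∀ y ∈ T, ∀ z ∈ {x | x ∈ l}, Adj Γ y z → z ∈ T := by
    intro y hy z hz hadj
    simp only [hT, Set.mem_insert_iff, Set.mem_singleton_iff] at hy ⊢
    rcases hy with rfl | rfl | rfl
    · rcases nbr y g2 g3 hg1.1 hg1.2 hg2.1 hg2.2 hg3.1 hg3.2 h12 h13 h23 z hz hadj with rfl | rfl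
      · exact Or.inr (Or.inl rfl)
      · exact Or.inr (Or.inr rfl)
    · rcases nbr y g1 g3 hg2.1 hg2.2 hg1.1 hg1.2 hg3.1 hg3.2 h12.symm h23 h13 z hz hadj with rfl | rfl
      · exact Or.inl rfl
      · exact Or.inr (Or.inr rfl)
    · rcases nbr y g1 g2 hg3.1 hg3.2 hg1.1 hg1.2 hg2.1 hg2.2 h13.symm h23.symm h12 z hz hadj with rfl | rfl
      · exact Or.inl rfl
      · exact Or.inr (Or.inl rfl)
  have keyflip : ∀ y ∈ T, ∀ z ∈ {x | x ∈ l}, flip (Adj Γ) y z → z ∈ T := by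
    intro y hy z hz hadj
    obtain ⟨hne, k', hz', hy'⟩ := hadj
    exact key y hy z hz ⟨hne.symm, k', hy', hz'⟩
  obtain ⟨a, b, hab⟩ := List.append_of_mem hg1.1
  have hg1T : g1 ∈ T := Or.inl rfl
  -- forward part
  have hchain2 : List.Chain' (Adj Γ) (a ++ g1 :: b) := hab ▸ hchain
  have hfwd : ∀ z ∈ b, z ∈ T := by
    have hcb : List.Chain (Adj Γ) g1 b := (List.isChain_append.1 hchain2).2.1
    exact chainAll key g1 b hcb (fun z hz => by simp [hab, hz]) hg1T
  -- backward part
  have hrev : List.Chain' (flip (Adj Γ)) (b.reverse ++ g1 :: a.reverse) := by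
    have : List.Chain' (flip (Adj Γ)) l.reverse := List.isChain_reverse.2 hchain
    simpa [hab, List.reverse_append] using this
  have hbwd : ∀ z ∈ a.reverse, z ∈ T := by
    have hca : List.Chain (flip (Adj Γ)) g1 a.reverse := (List.isChain_append.1 hrev).2.1
    exact chainAll keyflip g1 a.reverse hca
      (fun z hz => by simp only [List.mem_reverse] at hz; simp [hab, hz]) hg1T
  refine ⟨k, fun x hx => ?_⟩
  have hxT : x ∈ T := by
    rw [hab] at hx
    rcases List.mem_append.1 hx with hx | hx
    · exact hbwd x (List.mem_reverse.2 hx)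
    · rcases List.mem_cons.1 hx with rfl | hx
      · exact hg1T
      · exact hfwd x hx
  rcases hxT with rfl | rfl | rfl
  · exact hg1.2
  · exact hg2.2
  · exact hg3.2

end Birkhoff
end

section
/- Assume conditions (a) and (1.2) hold and W satisfies condition (w) and contains P⁰(Γ). If w is an extreme point of S(Γ,W), then each connected component of the support of w (as a subgraph of G) satisfies condition (a₁): any two distinct vertices g, g̃ of the same component satisfy Γ(g) ≠ Γ(g̃). -/
open Filter

namespace Birkhoff

variable {Ω ι : Type*}

open scoped Classical in
/-- The delta function at a point. -/
private noncomputable def delta (g : Ω) : Ω → ℝ := fun x => if x = g then 1 else 0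

private lemma delta_mem_P0 (Γ : ι → Set Ω) (g : Ω) : delta g ∈ P0Gamma Γ := by
  classical
  constructor
  · intro x
    by_cases h : x = g <;> simp [delta, h]
  · intro k
    by_cases h : g ∈ Γ k
    · refine ⟨1, le_refl 1, ?_⟩
      have h1 := hasSum_ite_eq (⟨g, h⟩ : Γ k) (1 : ℝ)
      have heq : (fun x : Γ k => delta g x)
          = fun x : Γ k => if x = (⟨g, h⟩ : Γ k) then (1 : ℝ) else 0 := by
        funext x
        by_cases hx : (x : Ω) = g <;>
          simp [delta, hx, Subtype.ext_iff]
      rw [heq]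
      exact h1
    · refine ⟨0, by norm_num, ?_⟩
      have heq : (fun x : Γ k => delta g x) = fun _ => (0 : ℝ) := by
        funext x
        by_cases hx : (x : Ω) = g
        · exact absurd (hx ▸ x.2) h
        · simp [delta, hx]
      rw [heq]
      exact hasSum_zero

private lemma delta_hasSum (Γ : ι → Set Ω) (g : Ω) (k : ι) (h : g ∈ Γ k) :
    HasSum (fun x : Γ k => delta g x) 1 := by
  classical
  have h1 := hasSum_ite_eq (⟨g, h⟩ : Γ k) (1 : ℝ)
  have heq : (fun x : Γ k => delta g x)
      = fun x : Γ k => if x = (⟨g, h⟩ : Γ k) then (1 : ℝ) else 0 := by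
    funext x
    by_cases hx : (x : Ω) = g <;>
      simp [delta, hx, Subtype.ext_iff]
  rw [heq]
  exact h1

private lemma delta_hasSum_zero (Γ : ι → Set Ω) (g : Ω) (k : ι) (h : g ∉ Γ k) :
    HasSum (fun x : Γ k => delta g x) 0 := by
  have heq : (fun x : Γ k => delta g x) = fun _ => (0 : ℝ) := by
    funext x
    by_cases hx : (x : Ω) = g
    · exact absurd (hx ▸ x.2) h
    · simp [delta, hx]
  rw [heq]
  exact hasSum_zero

/-- Corollary 2.8. -/
theorem stmt8 {Ω : Type*} [Countable Ω] (Γ : ℕ → Set Ω)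
    (ha : CondA Γ) (h12 : Cond12 Γ)
    (W : Submodule ℝ (Ω → ℝ)) (hW : CondW (W : Set (Ω → ℝ)))
    (hP0 : P0Gamma Γ ⊆ (W : Set (Ω → ℝ)))
    (w : Ω → ℝ) (hw : w ∈ Set.extremePoints ℝ (SGamma Γ ∩ (W : Set (Ω → ℝ)))) :
    ∀ g g₁ g₂ : Ω, g₁ ∈ component Γ (Function.support w) g →
      g₂ ∈ component Γ (Function.support w) g → g₁ ≠ g₂ → idx Γ g₁ ≠ idx Γ g₂ := by
  intro g g₁ g₂ h1 h2 hne hidx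
  obtain ⟨⟨⟨hwpos, hwsum⟩, hwW⟩, hext⟩ := hw
  -- g₁ and g₂ are in the support of w
  have mem_supp : ∀ {x : Ω}, x ∈ component Γ (Function.support w) g → 0 < w x := by
    intro x hx
    obtain ⟨l, _, hall, _, hlast⟩ := hx
    obtain ⟨hne', heq⟩ := List.mem_getLast?_eq_getLast (by rw [hlast]; rfl)
    have : x ∈ l := heq ▸ List.getLast_mem hne'
    exact lt_of_le_of_ne (hwpos x) (Ne.symm (hall x this))
  have hw1 : 0 < w g₁ := mem_supp h1
  have hw2 : 0 < w g₂ := mem_supp h2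
  set c : ℝ := min (w g₁) (w g₂) with hc
  have hcpos : 0 < c := lt_min hw1 hw2
  -- the perturbation v
  set v : Ω → ℝ := fun x => c * delta g₁ x - c * delta g₂ x with hv
  have hmemiff : ∀ k : ℕ, g₁ ∈ Γ k ↔ g₂ ∈ Γ k := by
    intro k
    constructor <;> intro h
    · have : k ∈ idx Γ g₁ := h
      rw [hidx] at this; exact this
    · have : k ∈ idx Γ g₂ := h
      rw [← hidx] at this; exact this
  have hvsum : ∀ k : ℕ, HasSum (fun x : Γ k => v x) 0 := by
    intro k
    by_cases h : g₁ ∈ Γ k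
    · have h2' : g₂ ∈ Γ k := (hmemiff k).mp h
      have := ((delta_hasSum Γ g₁ k h).mul_left c).sub
        ((delta_hasSum Γ g₂ k h2').mul_left c)
      simpa using this
    · have h2' : g₂ ∉ Γ k := fun hh => h ((hmemiff k).mpr hh)
      have := ((delta_hasSum_zero Γ g₁ k h).mul_left c).sub
        ((delta_hasSum_zero Γ g₂ k h2').mul_left c)
      simpa using this
  have hvW : v ∈ W := by
    have h1W : delta g₁ ∈ W := hP0 (delta_mem_P0 Γ g₁)
    have h2W : delta g₂ ∈ W := hP0 (delta_mem_P0 Γ g₂)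
    exact W.sub_mem (W.smul_mem c h1W) (W.smul_mem c h2W)
  have hv1 : v g₁ = c := by
    simp only [hv, delta, if_pos rfl, if_neg hne, if_true, mul_one, mul_zero, sub_zero]
  have hv2 : v g₂ = -c := by
    simp only [hv, delta, if_pos rfl, if_neg (Ne.symm hne), if_true, mul_one, mul_zero, zero_sub]
  have hv0 : ∀ x : Ω, x ≠ g₁ → x ≠ g₂ → v x = 0 := by
    intro x hx1 hx2; simp [hv, delta, hx1, hx2]
  -- both w + v and w - v are in S(Γ) ∩ W
  have hmem : ∀ s : ℝ, |s| ≤ 1 → w + s • v ∈ SGamma Γ ∩ (W : Set (Ω → ℝ)) := by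
    intro s hs
    refine ⟨⟨?_, ?_⟩, W.add_mem hwW (W.smul_mem s hvW)⟩
    · intro x
      have habs : |s * c| ≤ c := by
        rw [abs_mul]
        calc |s| * |c| ≤ 1 * |c| := mul_le_mul_of_nonneg_right hs (abs_nonneg c)
          _ = c := by rw [one_mul, abs_of_pos hcpos]
      obtain ⟨habs1, habs2⟩ := abs_le.mp habs
      by_cases hx1 : x = g₁
      · have hle1 : c ≤ w g₁ := by rw [hc]; exact min_le_left _ _
        rw [hx1]
        simp only [Pi.add_apply, Pi.smul_apply, hv1, smul_eq_mul]
        linarith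
      by_cases hx2 : x = g₂
      · have hle2 : c ≤ w g₂ := by rw [hc]; exact min_le_right _ _
        rw [hx2]
        simp only [Pi.add_apply, Pi.smul_apply, hv2, smul_eq_mul]
        linarith
      · simp only [Pi.add_apply, Pi.smul_apply, hv0 x hx1 hx2, smul_eq_mul,
          mul_zero, add_zero]
        exact hwpos x
    · intro k
      have := (hwsum k).add ((hvsum k).mul_left s)
      simpa using this
  have hA : w + (1 : ℝ) • v ∈ SGamma Γ ∩ (W : Set (Ω → ℝ)) := hmem 1 (by norm_num)
  have hB : w + (-1 : ℝ) • v ∈ SGamma Γ ∩ (W : Set (Ω → ℝ)) := hmem (-1) (by norm_num)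
  have hseg : w ∈ openSegment ℝ (w + (1 : ℝ) • v) (w + (-1 : ℝ) • v) := by
    refine ⟨1/2, 1/2, by norm_num, by norm_num, by norm_num, ?_⟩
    funext x
    simp only [Pi.add_apply, Pi.smul_apply, smul_eq_mul]
    ring
  have := hext hA hB hseg
  have hcontra := congrFun this g₁
  simp only [Pi.add_apply, Pi.smul_apply, smul_eq_mul, one_mul, hv1] at hcontra
  linarith

end Birkhoff
end
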